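/- Let r > 0 and let u, v : ℝ → ℝ be twice differentiable with (u̇, v̇) ≠ (0,0) for all t, and write γ(t) = ψ(u(t), v(t)) = (x(t), y(t), z(t)). Then the geodesic curvature κ of γ in H²(r) satisfies the minimality condition for surfaces of revolution of hyperbolic type, κ(t) = −(y ż − ẏ z)/(r x ‖γ̇‖), if and only if γ is an extrinsic catenary of hyperbolic type, i.e., (u,v) satisfies the Euler–Lagrange equations of ∫ f(u,v)‖γ̇‖ dt with f(u,v) = cosh(u/r)cosh(v/r). In particular, the generating curve of any minimal surface of revolution of hyperbolic type in H³(r) is an extrinsic catenary of hyperbolic type. -/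

import Mathlib

/-!
In semi-geodesic coordinates the geodesic curvature of `γ = ψ(u, v)` is
`κ = -(r cosh(u/r) (u̇ v̈ - ü v̇) + sinh(u/r) v̇ (2 u̇² + cosh²(u/r) v̇²)) / (r ‖γ̇‖³)`,
and the right-hand side of the minimality condition is
`-(u̇ sinh(v/r) - v̇ sinh(u/r) cosh(u/r) cosh(v/r)) / (r cosh(u/r) cosh(v/r) ‖γ̇‖)`.
Cross-multiplying (with `‖γ̇‖² = u̇² + cosh²(u/r) v̇²`), minimality is the vanishing of one
polynomial `catenaryDefect` in the 2-jet of `(u, v)`. Since the Lagrangian `f ‖γ̇‖` is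
homogeneous of degree one in the velocity, its two Euler–Lagrange expressions are `v̇` and `-u̇`
times a common factor, namely `cosh(u/r) · catenaryDefect / (r ‖γ̇‖³)`; as `(u̇, v̇) ≠ 0`, both
vanish exactly when `catenaryDefect` does.
-/

noncomputable section
open Real

/-- Minkowski inner product of `E₁³`. -/
def mink3 (X Y : ℝ × ℝ × ℝ) : ℝ := -(X.1 * Y.1) + X.2.1 * Y.2.1 + X.2.2 * Y.2.2

/-- Speed `‖γ̇‖ = √(−ẋ² + ẏ² + ż²)` of a curve `(x,y,z)` in `E₁³`. -/
def speed3 (x y z : ℝ → ℝ) (t : ℝ) : ℝ :=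
  Real.sqrt (-(deriv x t) ^ 2 + (deriv y t) ^ 2 + (deriv z t) ^ 2)

/-- Geodesic curvature of the curve `(x,y,z)` in `H²(r)`. -/
def kappaH2 (r : ℝ) (x y z : ℝ → ℝ) (t : ℝ) : ℝ :=
  -(x t * (deriv (deriv y) t * deriv z t - deriv y t * deriv (deriv z) t)
      - y t * (deriv (deriv x) t * deriv z t - deriv x t * deriv (deriv z) t)
      + z t * (deriv (deriv x) t * deriv y t - deriv x t * deriv (deriv y) t))
    / (r * (speed3 x y z t) ^ 3)

/-- First component of `γ(t) = ψ(u(t), v(t))` (semi-geodesic parametrization). -/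
def gX (r : ℝ) (u v : ℝ → ℝ) (t : ℝ) : ℝ :=
  r * Real.cosh (u t / r) * Real.cosh (v t / r)

/-- Second component of `γ(t) = ψ(u(t), v(t))`. -/
def gY (r : ℝ) (u v : ℝ → ℝ) (t : ℝ) : ℝ :=
  r * Real.cosh (u t / r) * Real.sinh (v t / r)

/-- Third component of `γ(t) = ψ(u(t), v(t))`. -/
def gZ (r : ℝ) (u v : ℝ → ℝ) (t : ℝ) : ℝ :=
  r * Real.sinh (u t / r)

/-- `‖γ̇‖` in semi-geodesic coordinates: `√(u̇² + cosh²(u/r) v̇²)`. -/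
def speedSG (r : ℝ) (u v : ℝ → ℝ) (t : ℝ) : ℝ :=
  Real.sqrt ((deriv u t) ^ 2 + (Real.cosh (u t / r)) ^ 2 * (deriv v t) ^ 2)

/-- Geodesic curvature of `γ(t) = ψ(u(t), v(t))` in `H²(r)`. -/
def kappaSG (r : ℝ) (u v : ℝ → ℝ) (t : ℝ) : ℝ :=
  kappaH2 r (gX r u v) (gY r u v) (gZ r u v) t

/-- The Euler–Lagrange equations of the functional `∫ f(u,v) ‖γ̇‖ dt` in
semi-geodesic coordinates. -/
def EulerLagrange (r : ℝ) (f : ℝ → ℝ → ℝ) (u v : ℝ → ℝ) : Prop :=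
  ∀ t : ℝ,
    deriv (fun a => f a (v t)) (u t) * speedSG r u v t
        + f (u t) (v t) * Real.sinh (u t / r) * Real.cosh (u t / r) * (deriv v t) ^ 2
          / (r * speedSG r u v t)
      = deriv (fun s => f (u s) (v s) * deriv u s / speedSG r u v s) t
    ∧ deriv (fun b => f (u t) b) (v t) * speedSG r u v t
      = deriv (fun s =>
          f (u s) (v s) * deriv v s * (Real.cosh (u s / r)) ^ 2 / speedSG r u v s) t

theorem eq_zero_iff_mul_eq_zero_and_mul_eq_zero {R : Type*} [MulZeroClass R] [NoZeroDivisors R]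
    {a b c : R} (h : (a, b) ≠ (0, 0)) : c = 0 ↔ b * c = 0 ∧ a * c = 0 := by
  refine ⟨fun hc => by simp [hc], fun ⟨hb, ha⟩ => ?_⟩
  by_contra hc
  exact h (by simp_all)

section SemiGeodesic

variable {r : ℝ} {u v : ℝ → ℝ} {t : ℝ}

theorem hasDerivAt_gX (hr : r ≠ 0) (hu : DifferentiableAt ℝ u t) (hv : DifferentiableAt ℝ v t) :
    HasDerivAt (gX r u v)
      (deriv u t * sinh (u t / r) * cosh (v t / r)
        + deriv v t * cosh (u t / r) * sinh (v t / r)) t :=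
  ((((hu.hasDerivAt.div_const r).cosh).const_mul r).mul
    (hv.hasDerivAt.div_const r).cosh).congr_deriv (by field_simp)

theorem hasDerivAt_gY (hr : r ≠ 0) (hu : DifferentiableAt ℝ u t) (hv : DifferentiableAt ℝ v t) :
    HasDerivAt (gY r u v)
      (deriv u t * sinh (u t / r) * sinh (v t / r)
        + deriv v t * cosh (u t / r) * cosh (v t / r)) t :=
  ((((hu.hasDerivAt.div_const r).cosh).const_mul r).mul
    (hv.hasDerivAt.div_const r).sinh).congr_deriv (by field_simp)

theorem hasDerivAt_gZ (hr : r ≠ 0) (hu : DifferentiableAt ℝ u t) :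
    HasDerivAt (gZ r u v) (deriv u t * cosh (u t / r)) t :=
  (((hu.hasDerivAt.div_const r).sinh).const_mul r).congr_deriv (by field_simp)

theorem hasDerivAt_deriv_gX (hr : r ≠ 0) (hu : Differentiable ℝ u) (hv : Differentiable ℝ v)
    (hu2 : DifferentiableAt ℝ (deriv u) t) (hv2 : DifferentiableAt ℝ (deriv v) t) :
    HasDerivAt (deriv (gX r u v))
      (deriv (deriv u) t * sinh (u t / r) * cosh (v t / r)
        + deriv (deriv v) t * cosh (u t / r) * sinh (v t / r)
        + (deriv u t ^ 2 * cosh (u t / r) * cosh (v t / r)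
          + 2 * deriv u t * deriv v t * sinh (u t / r) * sinh (v t / r)
          + deriv v t ^ 2 * cosh (u t / r) * cosh (v t / r)) / r) t := by
  rw [funext fun s => (hasDerivAt_gX hr (hu s) (hv s)).deriv]
  have hu' := (hu t).hasDerivAt.div_const r
  have hv' := (hv t).hasDerivAt.div_const r
  exact (((hu2.hasDerivAt.mul hu'.sinh).mul hv'.cosh).add
    ((hv2.hasDerivAt.mul hu'.cosh).mul hv'.sinh)).congr_deriv (by simp only [Pi.mul_apply]; ring)

theorem hasDerivAt_deriv_gY (hr : r ≠ 0) (hu : Differentiable ℝ u) (hv : Differentiable ℝ v)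
    (hu2 : DifferentiableAt ℝ (deriv u) t) (hv2 : DifferentiableAt ℝ (deriv v) t) :
    HasDerivAt (deriv (gY r u v))
      (deriv (deriv u) t * sinh (u t / r) * sinh (v t / r)
        + deriv (deriv v) t * cosh (u t / r) * cosh (v t / r)
        + (deriv u t ^ 2 * cosh (u t / r) * sinh (v t / r)
          + 2 * deriv u t * deriv v t * sinh (u t / r) * cosh (v t / r)
          + deriv v t ^ 2 * cosh (u t / r) * sinh (v t / r)) / r) t := by
  rw [funext fun s => (hasDerivAt_gY hr (hu s) (hv s)).deriv]
  have hu' := (hu t).hasDerivAt.div_const r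
  have hv' := (hv t).hasDerivAt.div_const r
  exact (((hu2.hasDerivAt.mul hu'.sinh).mul hv'.sinh).add
    ((hv2.hasDerivAt.mul hu'.cosh).mul hv'.cosh)).congr_deriv (by simp only [Pi.mul_apply]; ring)

theorem hasDerivAt_deriv_gZ (hr : r ≠ 0) (hu : Differentiable ℝ u)
    (hu2 : DifferentiableAt ℝ (deriv u) t) :
    HasDerivAt (deriv (gZ r u v))
      (deriv (deriv u) t * cosh (u t / r) + deriv u t ^ 2 * sinh (u t / r) / r) t := by
  rw [funext fun s => (hasDerivAt_gZ (v := v) hr (hu s)).deriv]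
  exact (hu2.hasDerivAt.mul ((hu t).hasDerivAt.div_const r).cosh).congr_deriv (by ring)

theorem speed3_eq_speedSG (hr : r ≠ 0) (hu : DifferentiableAt ℝ u t)
    (hv : DifferentiableAt ℝ v t) :
    speed3 (gX r u v) (gY r u v) (gZ r u v) t = speedSG r u v t := by
  rw [speed3, speedSG, (hasDerivAt_gX hr hu hv).deriv, (hasDerivAt_gY hr hu hv).deriv,
    (hasDerivAt_gZ hr hu).deriv]
  congr 1
  linear_combination
    (deriv v t ^ 2 * cosh (u t / r) ^ 2 - deriv u t ^ 2 * sinh (u t / r) ^ 2)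
        * cosh_sq_sub_sinh_sq (v t / r)
      + deriv u t ^ 2 * cosh_sq_sub_sinh_sq (u t / r)

theorem gY_mul_deriv_gZ_sub_deriv_gY_mul_gZ (hr : r ≠ 0) (hu : DifferentiableAt ℝ u t)
    (hv : DifferentiableAt ℝ v t) :
    gY r u v t * deriv (gZ r u v) t - deriv (gY r u v) t * gZ r u v t
      = r * (deriv u t * sinh (v t / r)
          - deriv v t * sinh (u t / r) * cosh (u t / r) * cosh (v t / r)) := by
  rw [(hasDerivAt_gY hr hu hv).deriv, (hasDerivAt_gZ hr hu).deriv, gY, gZ]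
  linear_combination r * deriv u t * sinh (v t / r) * cosh_sq_sub_sinh_sq (u t / r)

theorem kappaSG_eq (hr : r ≠ 0) (hu : Differentiable ℝ u) (hv : Differentiable ℝ v)
    (hu2 : DifferentiableAt ℝ (deriv u) t) (hv2 : DifferentiableAt ℝ (deriv v) t) :
    kappaSG r u v t
      = -(r * cosh (u t / r) * (deriv u t * deriv (deriv v) t - deriv (deriv u) t * deriv v t)
          + sinh (u t / r) * deriv v t
            * (2 * deriv u t ^ 2 + cosh (u t / r) ^ 2 * deriv v t ^ 2))
        / (r * speedSG r u v t ^ 3) := by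
  rw [kappaSG, kappaH2, speed3_eq_speedSG hr (hu t) (hv t),
    (hasDerivAt_deriv_gX hr hu hv hu2 hv2).deriv, (hasDerivAt_deriv_gY hr hu hv hu2 hv2).deriv,
    (hasDerivAt_deriv_gZ hr hu hu2).deriv, (hasDerivAt_gX hr (hu t) (hv t)).deriv,
    (hasDerivAt_gY hr (hu t) (hv t)).deriv, (hasDerivAt_gZ hr (hu t)).deriv, gX, gY, gZ]
  congr 2
  field_simp
  -- `γ` is the Lorentz boost by `v/r` of a curve in the `xz`-plane, so the determinant is
  -- `cosh² (v/r) - sinh² (v/r)` times its value at `v = 0`.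
  linear_combination
    ((r * cosh (u t / r) * (deriv u t * deriv (deriv v) t - deriv (deriv u) t * deriv v t)
          + 2 * deriv u t ^ 2 * deriv v t * sinh (u t / r))
        * (cosh (u t / r) ^ 2 - sinh (u t / r) ^ 2)
      + deriv v t ^ 3 * sinh (u t / r) * cosh (u t / r) ^ 2) * cosh_sq_sub_sinh_sq (v t / r)
    + (r * cosh (u t / r) * (deriv u t * deriv (deriv v) t - deriv (deriv u) t * deriv v t)
        + 2 * deriv u t ^ 2 * deriv v t * sinh (u t / r)) * cosh_sq_sub_sinh_sq (u t / r)

theorem speedSG_sq : speedSG r u v t ^ 2 = deriv u t ^ 2 + cosh (u t / r) ^ 2 * deriv v t ^ 2 :=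
  sq_sqrt (by positivity)

theorem speedSG_pos (hreg : (deriv u t, deriv v t) ≠ (0, 0)) : 0 < speedSG r u v t := by
  refine sqrt_pos.2 ?_
  rcases eq_or_ne (deriv u t) 0 with hu | hu
  · have hv : deriv v t ≠ 0 := fun hv => hreg (by rw [hu, hv])
    positivity
  · positivity

def catenaryDefect (r : ℝ) (u v : ℝ → ℝ) (t : ℝ) : ℝ :=
  r * cosh (u t / r) ^ 2 * cosh (v t / r)
      * (deriv u t * deriv (deriv v) t - deriv (deriv u) t * deriv v t)
    + sinh (u t / r) * cosh (u t / r) * cosh (v t / r) * deriv v t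
      * (3 * deriv u t ^ 2 + 2 * cosh (u t / r) ^ 2 * deriv v t ^ 2)
    - deriv u t * sinh (v t / r) * (deriv u t ^ 2 + cosh (u t / r) ^ 2 * deriv v t ^ 2)

theorem minimal_iff_catenaryDefect_eq_zero (hr : r ≠ 0) (hu : Differentiable ℝ u)
    (hv : Differentiable ℝ v) (hu2 : DifferentiableAt ℝ (deriv u) t)
    (hv2 : DifferentiableAt ℝ (deriv v) t) (hreg : (deriv u t, deriv v t) ≠ (0, 0)) :
    kappaSG r u v t
        = -(gY r u v t * deriv (gZ r u v) t - deriv (gY r u v) t * gZ r u v t)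
          / (r * gX r u v t * speed3 (gX r u v) (gY r u v) (gZ r u v) t)
      ↔ catenaryDefect r u v t = 0 := by
  have hW := speedSG_pos (r := r) hreg
  rw [kappaSG_eq hr hu hv hu2 hv2, gY_mul_deriv_gZ_sub_deriv_gY_mul_gZ hr (hu t) (hv t),
    speed3_eq_speedSG hr (hu t) (hv t), gX, div_eq_div_iff (by positivity) (by positivity),
    ← sub_eq_zero]
  have key := speedSG_sq (r := r) (u := u) (v := v) (t := t)
  set W := speedSG r u v t
  rw [show _ - _ = -(r ^ 2 * W) * catenaryDefect r u v t by
    rw [catenaryDefect]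
    linear_combination r ^ 2 * W * (deriv u t * sinh (v t / r)
      - deriv v t * sinh (u t / r) * cosh (u t / r) * cosh (v t / r)) * key]
  simp [hr, hW.ne']

theorem hasDerivAt_speedSG (hu : DifferentiableAt ℝ u t) (hu2 : DifferentiableAt ℝ (deriv u) t)
    (hv2 : DifferentiableAt ℝ (deriv v) t) (hreg : (deriv u t, deriv v t) ≠ (0, 0)) :
    HasDerivAt (speedSG r u v)
      ((deriv u t * deriv (deriv u) t
          + cosh (u t / r) * sinh (u t / r) * deriv u t * deriv v t ^ 2 / r
          + cosh (u t / r) ^ 2 * deriv v t * deriv (deriv v) t) / speedSG r u v t) t :=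
  (((hu2.hasDerivAt.pow 2).add (((hu.hasDerivAt.div_const r).cosh.pow 2).mul
      (hv2.hasDerivAt.pow 2))).sqrt (sqrt_pos.1 (speedSG_pos hreg)).ne').congr_deriv
    (by simp only [speedSG, Pi.add_apply, Pi.mul_apply, Pi.pow_apply]; field_simp; ring)

theorem hasDerivAt_momentum_u (hr : r ≠ 0) (hu : DifferentiableAt ℝ u t)
    (hv : DifferentiableAt ℝ v t) (hu2 : DifferentiableAt ℝ (deriv u) t)
    (hv2 : DifferentiableAt ℝ (deriv v) t) (hreg : (deriv u t, deriv v t) ≠ (0, 0)) :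
    HasDerivAt (fun s => cosh (u s / r) * cosh (v s / r) * deriv u s / speedSG r u v s)
      (((sinh (u t / r) * cosh (v t / r) * deriv u t ^ 2
            + cosh (u t / r) * sinh (v t / r) * deriv u t * deriv v t
            + r * cosh (u t / r) * cosh (v t / r) * deriv (deriv u) t) * speedSG r u v t ^ 2
          - cosh (u t / r) * cosh (v t / r) * deriv u t
            * (r * deriv u t * deriv (deriv u) t
              + cosh (u t / r) * sinh (u t / r) * deriv u t * deriv v t ^ 2
              + r * cosh (u t / r) ^ 2 * deriv v t * deriv (deriv v) t))
        / (r * speedSG r u v t ^ 3)) t := by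
  have hW := (speedSG_pos (r := r) hreg).ne'
  have hu' := hu.hasDerivAt.div_const r
  exact (((hu'.cosh.mul (hv.hasDerivAt.div_const r).cosh).mul hu2.hasDerivAt).div
    (hasDerivAt_speedSG hu hu2 hv2 hreg) hW).congr_deriv
    (by simp only [Pi.mul_apply]; field_simp)

theorem hasDerivAt_momentum_v (hr : r ≠ 0) (hu : DifferentiableAt ℝ u t)
    (hv : DifferentiableAt ℝ v t) (hu2 : DifferentiableAt ℝ (deriv u) t)
    (hv2 : DifferentiableAt ℝ (deriv v) t) (hreg : (deriv u t, deriv v t) ≠ (0, 0)) :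
    HasDerivAt
      (fun s => cosh (u s / r) * cosh (v s / r) * deriv v s * cosh (u s / r) ^ 2 / speedSG r u v s)
      (((3 * cosh (u t / r) ^ 2 * sinh (u t / r) * cosh (v t / r) * deriv u t * deriv v t
            + cosh (u t / r) ^ 3 * sinh (v t / r) * deriv v t ^ 2
            + r * cosh (u t / r) ^ 3 * cosh (v t / r) * deriv (deriv v) t) * speedSG r u v t ^ 2
          - cosh (u t / r) ^ 3 * cosh (v t / r) * deriv v t
            * (r * deriv u t * deriv (deriv u) t
              + cosh (u t / r) * sinh (u t / r) * deriv u t * deriv v t ^ 2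
              + r * cosh (u t / r) ^ 2 * deriv v t * deriv (deriv v) t))
        / (r * speedSG r u v t ^ 3)) t := by
  have hW := (speedSG_pos (r := r) hreg).ne'
  have hu' := hu.hasDerivAt.div_const r
  exact ((((hu'.cosh.mul (hv.hasDerivAt.div_const r).cosh).mul hv2.hasDerivAt).mul
    (hu'.cosh.pow 2)).div (hasDerivAt_speedSG hu hu2 hv2 hreg) hW).congr_deriv
    (by simp only [Pi.mul_apply, Pi.pow_apply]; field_simp; ring)

theorem eulerLagrange_u_iff (hr : r ≠ 0) (hu : DifferentiableAt ℝ u t)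
    (hv : DifferentiableAt ℝ v t) (hu2 : DifferentiableAt ℝ (deriv u) t)
    (hv2 : DifferentiableAt ℝ (deriv v) t) (hreg : (deriv u t, deriv v t) ≠ (0, 0)) :
    deriv (fun a => cosh (a / r) * cosh (v t / r)) (u t) * speedSG r u v t
        + cosh (u t / r) * cosh (v t / r) * sinh (u t / r) * cosh (u t / r) * deriv v t ^ 2
          / (r * speedSG r u v t)
      = deriv (fun s => cosh (u s / r) * cosh (v s / r) * deriv u s / speedSG r u v s) t
      ↔ deriv v t * catenaryDefect r u v t = 0 := by
  have hW := speedSG_pos (r := r) hreg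
  have key := speedSG_sq (r := r) (u := u) (v := v) (t := t)
  set W := speedSG r u v t
  have hfu : deriv (fun a => cosh (a / r) * cosh (v t / r)) (u t)
      = sinh (u t / r) * cosh (v t / r) / r :=
    ((((hasDerivAt_id (u t)).div_const r).cosh.mul_const _).congr_deriv (by simp; ring)).deriv
  rw [hfu, (hasDerivAt_momentum_u hr hu hv hu2 hv2 hreg).deriv, ← sub_eq_zero,
    show sinh (u t / r) * cosh (v t / r) / r * W
        + cosh (u t / r) * cosh (v t / r) * sinh (u t / r) * cosh (u t / r) * deriv v t ^ 2
          / (r * W)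
      = (sinh (u t / r) * cosh (v t / r) * W ^ 4
          + cosh (u t / r) ^ 2 * sinh (u t / r) * cosh (v t / r) * deriv v t ^ 2 * W ^ 2)
        / (r * W ^ 3) by field_simp,
    ← sub_div, div_eq_zero_iff,
    show (_ : ℝ) - _ = cosh (u t / r) * (deriv v t * catenaryDefect r u v t) by
      rw [catenaryDefect]
      linear_combination (sinh (u t / r) * cosh (v t / r) * W ^ 2
        + 2 * sinh (u t / r) * cosh (v t / r) * cosh (u t / r) ^ 2 * deriv v t ^ 2
        - cosh (u t / r) * sinh (v t / r) * deriv u t * deriv v t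
        - r * cosh (u t / r) * cosh (v t / r) * deriv (deriv u) t) * key]
  simp [hr, hW.ne', (cosh_pos _).ne']

theorem eulerLagrange_v_iff (hr : r ≠ 0) (hu : DifferentiableAt ℝ u t)
    (hv : DifferentiableAt ℝ v t) (hu2 : DifferentiableAt ℝ (deriv u) t)
    (hv2 : DifferentiableAt ℝ (deriv v) t) (hreg : (deriv u t, deriv v t) ≠ (0, 0)) :
    deriv (fun b => cosh (u t / r) * cosh (b / r)) (v t) * speedSG r u v t
      = deriv (fun s =>
          cosh (u s / r) * cosh (v s / r) * deriv v s * cosh (u s / r) ^ 2 / speedSG r u v s) t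
      ↔ deriv u t * catenaryDefect r u v t = 0 := by
  have hW := speedSG_pos (r := r) hreg
  have key := speedSG_sq (r := r) (u := u) (v := v) (t := t)
  set W := speedSG r u v t
  have hfv : deriv (fun b => cosh (u t / r) * cosh (b / r)) (v t)
      = cosh (u t / r) * sinh (v t / r) / r :=
    ((((hasDerivAt_id (v t)).div_const r).cosh.const_mul _).congr_deriv (by simp; ring)).deriv
  rw [hfv, (hasDerivAt_momentum_v hr hu hv hu2 hv2 hreg).deriv, ← sub_eq_zero,
    show cosh (u t / r) * sinh (v t / r) / r * W
      = cosh (u t / r) * sinh (v t / r) * W ^ 4 / (r * W ^ 3) by field_simp,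
    ← sub_div, div_eq_zero_iff,
    show (_ : ℝ) - _ = -(cosh (u t / r) * (deriv u t * catenaryDefect r u v t)) by
      rw [catenaryDefect]
      linear_combination (cosh (u t / r) * sinh (v t / r) * W ^ 2
        + cosh (u t / r) * sinh (v t / r) * deriv u t ^ 2
        - 3 * cosh (u t / r) ^ 2 * sinh (u t / r) * cosh (v t / r) * deriv u t * deriv v t
        - r * cosh (u t / r) ^ 3 * cosh (v t / r) * deriv (deriv v) t) * key]
  simp [hr, hW.ne', (cosh_pos _).ne']

end SemiGeodesic

/-- minimality condition for hyperbolic surfaces of revolution holds iff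
the generating curve is an extrinsic catenary of hyperbolic type. -/
theorem minimal_hyperbolic_iff_extrinsic_catenary (r : ℝ) (hr : 0 < r) (u v : ℝ → ℝ)
    (hu : Differentiable ℝ u) (hu2 : Differentiable ℝ (deriv u))
    (hv : Differentiable ℝ v) (hv2 : Differentiable ℝ (deriv v))
    (hreg : ∀ t : ℝ, (deriv u t, deriv v t) ≠ (0, 0)) :
    (∀ t : ℝ,
      kappaSG r u v t
        = -(gY r u v t * deriv (gZ r u v) t - deriv (gY r u v) t * gZ r u v t)
          / (r * gX r u v t * speed3 (gX r u v) (gY r u v) (gZ r u v) t)) ↔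
      EulerLagrange r (fun a b => Real.cosh (a / r) * Real.cosh (b / r)) u v := by
  calc (∀ t, _) ↔ ∀ t, catenaryDefect r u v t = 0 :=
        forall_congr' fun t =>
          minimal_iff_catenaryDefect_eq_zero hr.ne' hu hv (hu2 t) (hv2 t) (hreg t)
    _ ↔ ∀ t, deriv v t * catenaryDefect r u v t = 0 ∧ deriv u t * catenaryDefect r u v t = 0 :=
        forall_congr' fun t => eq_zero_iff_mul_eq_zero_and_mul_eq_zero (hreg t)
    _ ↔ _ :=
        forall_congr' fun t =>
          (and_congr (eulerLagrange_u_iff hr.ne' (hu t) (hv t) (hu2 t) (hv2 t) (hreg t))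
            (eulerLagrange_v_iff hr.ne' (hu t) (hv t) (hu2 t) (hv2 t) (hreg t))).symm
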